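/- arXiv:math/0210269 — 2 statements merged into one kernel-verified Lean document; each statement's English description precedes it below -/
import Mathlib

section
/- Let k be a number field of degree n = [k:ℚ], let I be a nonzero fractional ideal of k, and let x = (x_v)_v be real weights indexed by the infinite places of k satisfying ∏_v e^{x_v} = N(I). Then for a nonzero f ∈ I one has Q_x(f) = n if and only if I is the principal fractional ideal generated by f and |f|_v^{e_v} = e^{x_v} for every infinite place v, where e_v = 1 if v is real and e_v = 2 if v is complex. -/
open NumberField Finset
open scoped Classical

variable (k : Type*) [Field k] [NumberField k]

/-- `Q_x(f) = ∑_{v real} |f|_v² e^{-2 x_v} + 2 ∑_{v complex} |f|_v² e^{-x_v}`. -/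
noncomputable def arakelovQ (x : InfinitePlace k → ℝ) (f : k) : ℝ :=
  ∑ v : InfinitePlace k,
    if v.IsReal then (v f) ^ 2 * Real.exp (-2 * x v)
    else 2 * (v f) ^ 2 * Real.exp (-(x v))

/-!
Write `t_v = 2 (e_v log |f|_v - x_v) / e_v`. Then `Q_x(f) = ∑_v e_v exp t_v`, and by the product
formula `∑_v e_v t_v = 2 log (|N(f)| / N(I))`, which is `≥ 0` because `(f) ⊆ I`. Since
`exp t ≥ 1 + t` with equality only at `t = 0`, `Q_x(f) ≥ ∑_v e_v = n`, with equality iff every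
`t_v` vanishes; and then `N((f)) = N(I)`, which forces `(f) = I`.
-/

open scoped nonZeroDivisors

namespace FractionalIdeal

variable {R : Type*} [CommRing R] [IsDedekindDomain R] {K : Type*} [Field K] [Algebra R K]
  [IsFractionRing R K]

theorem exists_coeIdeal_mul_eq_of_le {I J : FractionalIdeal R⁰ K} (hJ : J ≠ 0) (h : I ≤ J) :
    ∃ I₀ : Ideal R, (I₀ : FractionalIdeal R⁰ K) * J = I := by
  obtain ⟨I₀, hI₀⟩ := le_one_iff_exists_coeIdeal.mp <|
    (mul_le_mul_left h J⁻¹).trans_eq (mul_inv_cancel₀ hJ)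
  exact ⟨I₀, by rw [hI₀, mul_assoc, inv_mul_cancel₀ hJ, mul_one]⟩

variable [Module.Free ℤ R] [Module.Finite ℤ R]

theorem absNorm_le_absNorm_of_le {I J : FractionalIdeal R⁰ K} (hI : I ≠ 0) (h : I ≤ J) :
    absNorm J ≤ absNorm I := by
  obtain ⟨I₀, rfl⟩ := exists_coeIdeal_mul_eq_of_le (ne_bot_of_le_ne_bot hI h) h
  have hI₀ : Ideal.absNorm I₀ ≠ 0 := by
    rw [Ne, Ideal.absNorm_eq_zero_iff]
    rintro rfl
    simp at hI
  rw [map_mul, coeIdeal_absNorm]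
  exact le_mul_of_one_le_left (absNorm_nonneg J) (by exact_mod_cast Nat.one_le_iff_ne_zero.mpr hI₀)

theorem eq_of_le_of_absNorm_eq {I J : FractionalIdeal R⁰ K} (hI : I ≠ 0) (h : I ≤ J)
    (hIJ : absNorm I = absNorm J) : I = J := by
  have hJ : J ≠ 0 := ne_bot_of_le_ne_bot hI h
  obtain ⟨I₀, rfl⟩ := exists_coeIdeal_mul_eq_of_le hJ h
  rw [map_mul, coeIdeal_absNorm, mul_eq_right₀ (absNorm_eq_zero_iff.not.mpr hJ)] at hIJ
  have hI₀ : Ideal.absNorm I₀ = 1 := by exact_mod_cast hIJ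
  rw [Ideal.absNorm_eq_one_iff.mp hI₀, coeIdeal_top, one_mul]

end FractionalIdeal

namespace Real

theorem sum_mul_exp_eq_sum_iff {ι : Type*} {s : Finset ι} {w t : ι → ℝ}
    (hw : ∀ i ∈ s, 0 < w i) (ht : 0 ≤ ∑ i ∈ s, w i * t i) :
    ∑ i ∈ s, w i * exp (t i) = ∑ i ∈ s, w i ↔ ∀ i ∈ s, t i = 0 := by
  have hgap : ∀ i ∈ s, 0 ≤ w i * (exp (t i) - (t i + 1)) := fun i hi =>
    mul_nonneg (hw i hi).le (sub_nonneg.mpr (add_one_le_exp _))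
  have hsplit : ∑ i ∈ s, w i * exp (t i) - ∑ i ∈ s, w i
      = ∑ i ∈ s, w i * (exp (t i) - (t i + 1)) + ∑ i ∈ s, w i * t i := by
    rw [← sum_sub_distrib, ← sum_add_distrib]
    exact sum_congr rfl fun i _ => by ring
  constructor
  · intro h i hi
    have hzero : ∑ i ∈ s, w i * (exp (t i) - (t i + 1)) = 0 := by
      linarith [sum_nonneg hgap]
    have := (sum_eq_zero_iff_of_nonneg hgap).mp hzero i hi
    by_contra hti
    nlinarith [add_one_lt_exp hti, hw i hi]
  · intro h
    exact sum_congr rfl fun i hi => by rw [h i hi, exp_zero, mul_one]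

theorem pow_eq_exp_iff_mul_log_eq {a : ℝ} (ha : 0 < a) (n : ℕ) (y : ℝ) :
    a ^ n = exp y ↔ n * log a = y := by
  rw [← exp_log (pow_pos ha n), exp_eq_exp, log_pow]

end Real

noncomputable def arakelovExponent {K : Type*} [Field K] (x : InfinitePlace K → ℝ) (f : K)
    (v : InfinitePlace K) : ℝ :=
  2 * (v.mult * Real.log (v f) - x v) / v.mult

theorem arakelovQ_eq_sum_mult_mul_exp (x : InfinitePlace k → ℝ) {f : k} (hf : f ≠ 0) :
    arakelovQ k x f = ∑ v, (v.mult : ℝ) * Real.exp (arakelovExponent x f v) := by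
  refine sum_congr rfl fun v _ => ?_
  have hsq : v f ^ 2 = Real.exp (2 * Real.log (v f)) := by
    rw [two_mul, Real.exp_add, Real.exp_log (InfinitePlace.pos_iff.mpr hf), sq]
  by_cases hreal : v.IsReal
  · simp only [arakelovExponent, hreal, if_true, InfinitePlace.mult]
    rw [hsq, ← Real.exp_add]
    push_cast
    ring_nf
  · simp only [arakelovExponent, hreal, if_false, InfinitePlace.mult]
    rw [hsq, mul_assoc, ← Real.exp_add]
    push_cast
    ring_nf

theorem arakelovExponent_eq_zero_iff {K : Type*} [Field K] (x : InfinitePlace K → ℝ) {f : K}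
    (hf : f ≠ 0) (v : InfinitePlace K) :
    arakelovExponent x f v = 0 ↔ v f ^ v.mult = Real.exp (x v) := by
  rw [Real.pow_eq_exp_iff_mul_log_eq (InfinitePlace.pos_iff.mpr hf), arakelovExponent]
  simp [v.mult_ne_zero, sub_eq_zero]

theorem sum_mult_mul_log_eq_log_abs_norm {f : k} (hf : f ≠ 0) :
    ∑ v : InfinitePlace k, (v.mult : ℝ) * Real.log (v f) = Real.log |(Algebra.norm ℚ f : ℝ)| := by
  rw [← Rat.cast_abs, ← InfinitePlace.prod_eq_abs_norm,
    Real.log_prod fun v _ => pow_ne_zero _ (InfinitePlace.pos_iff.mpr hf).ne']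
  simp_rw [Real.log_pow]

theorem sum_mult_mul_arakelovExponent {x : InfinitePlace k → ℝ} {c : ℝ}
    (hx : ∏ v : InfinitePlace k, Real.exp (x v) = c) {f : k} (hf : f ≠ 0) :
    ∑ v, (v.mult : ℝ) * arakelovExponent x f v
      = 2 * (Real.log |(Algebra.norm ℚ f : ℝ)| - Real.log c) := by
  have hterm (v : InfinitePlace k) :
      (v.mult : ℝ) * arakelovExponent x f v = 2 * (v.mult * Real.log (v f) - x v) :=
    mul_div_cancel₀ _ (Nat.cast_ne_zero.mpr v.mult_ne_zero)
  rw [sum_congr rfl fun v _ => hterm v, ← mul_sum, sum_sub_distrib,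
    sum_mult_mul_log_eq_log_abs_norm k hf, ← hx, ← Real.exp_sum, Real.log_exp]

theorem arakelovQ_eq_degree_iff (I : FractionalIdeal (nonZeroDivisors (𝓞 k)) k)
    (x : InfinitePlace k → ℝ)
    (hx : ∏ v : InfinitePlace k, Real.exp (x v) = (FractionalIdeal.absNorm I : ℝ))
    (f : k) (hfI : f ∈ I) (hf : f ≠ 0) :
    arakelovQ k x f = (Module.finrank ℚ k : ℝ) ↔
      (I = FractionalIdeal.spanSingleton (nonZeroDivisors (𝓞 k)) f ∧
       ∀ v : InfinitePlace k, (v f) ^ (if v.IsReal then 1 else 2) = Real.exp (x v)) := by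
  set J := FractionalIdeal.spanSingleton (nonZeroDivisors (𝓞 k)) f
  have hJI : J ≤ I := FractionalIdeal.spanSingleton_le_iff_mem.mpr hfI
  have hJ : J ≠ 0 := FractionalIdeal.spanSingleton_ne_zero_iff.mpr hf
  have hnormJ : (FractionalIdeal.absNorm J : ℝ) = |(Algebra.norm ℚ f : ℝ)| := by
    rw [FractionalIdeal.absNorm_span_singleton, Rat.cast_abs]
  have hnormI : 0 < (FractionalIdeal.absNorm I : ℝ) := hx ▸ prod_pos fun v _ => Real.exp_pos _
  have hnorm_le : (FractionalIdeal.absNorm I : ℝ) ≤ FractionalIdeal.absNorm J := by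
    exact_mod_cast FractionalIdeal.absNorm_le_absNorm_of_le hJ hJI
  have hsum := sum_mult_mul_arakelovExponent k hx hf
  rw [← hnormJ] at hsum
  rw [arakelovQ_eq_sum_mult_mul_exp k x hf, ← InfinitePlace.sum_mult_eq, Nat.cast_sum,
    Real.sum_mul_exp_eq_sum_iff (fun v _ => by exact_mod_cast InfinitePlace.mult_pos)
      (by rw [hsum]; linarith [Real.log_le_log hnormI hnorm_le])]
  simp only [mem_univ, forall_const, arakelovExponent_eq_zero_iff x hf]
  refine ⟨fun h => ⟨?_, h⟩, fun h => h.2⟩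
  rw [sum_eq_zero fun v _ => by rw [(arakelovExponent_eq_zero_iff x hf v).mpr (h v), mul_zero]]
    at hsum
  refine (FractionalIdeal.eq_of_le_of_absNorm_eq hJ hJI ?_).symm
  exact_mod_cast Real.log_injOn_pos (hnormI.trans_le hnorm_le) hnormI (by linarith)
end

section
/- Let k be a number field of degree n = [k:ℚ], let I be a nonzero fractional ideal of k which is not principal, and let x = (x_v)_v be real weights indexed by the infinite places of k satisfying ∏_v e^{x_v} = N(I). Then for every nonzero f ∈ I one has Q_x(f) ≥ n·4^{1/n}. -/
open NumberField Finset
open scoped Classical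

variable (k : Type*) [Field k] [NumberField k]

/-!
Writing `Q_x(f) = ∑_v m_v z_v` with `m_v` the multiplicity of `v` and
`z_v = |f|_v² e^{-2 x_v / m_v}`, the weighted AM-GM inequality gives
`Q_x(f) ≥ n (∏_v z_v^{m_v})^{1/n} = n (|N(f)| / N(I))^{2/n}`.
Since `I` is not principal, `(f) = I J` for a proper nonzero integral ideal `J`,
so `|N(f)| / N(I) = N(J) ≥ 2`.
-/

namespace FractionalIdeal

variable {R K : Type*} [CommRing R] [IsDedekindDomain R] [Field K] [Algebra R K]
  [IsFractionRing R K]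

theorem exists_mul_coeIdeal_eq_spanSingleton {I : FractionalIdeal (nonZeroDivisors R) K}
    (hI : I ≠ 0) {f : K} (hf : f ∈ I) :
    ∃ J : Ideal R, I * J = spanSingleton (nonZeroDivisors R) f := by
  have hle : I⁻¹ * spanSingleton (nonZeroDivisors R) f ≤ 1 :=
    calc I⁻¹ * spanSingleton _ f ≤ I⁻¹ * I := mul_right_mono (spanSingleton_le_iff_mem.mpr hf)
      _ = 1 := inv_mul_cancel₀ hI
  obtain ⟨J, hJ⟩ := le_one_iff_exists_coeIdeal.mp hle
  exact ⟨J, by rw [hJ, ← mul_assoc, mul_inv_cancel₀ hI, one_mul]⟩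

end FractionalIdeal

variable {k}

theorem two_mul_absNorm_le_abs_norm_of_not_isPrincipal
    {I : FractionalIdeal (nonZeroDivisors (𝓞 k)) k} (hI : I ≠ 0)
    (hnp : ¬ (I : Submodule (𝓞 k) k).IsPrincipal) {f : k} (hfI : f ∈ I) (hf : f ≠ 0) :
    2 * FractionalIdeal.absNorm I ≤ |Algebra.norm ℚ f| := by
  obtain ⟨J, hJ⟩ := FractionalIdeal.exists_mul_coeIdeal_eq_spanSingleton hI hfI
  have hJ_ne_bot : J ≠ ⊥ := by
    rintro rfl
    simp [eq_comm, FractionalIdeal.spanSingleton_eq_zero_iff, hf] at hJ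
  have hJ_ne_top : J ≠ ⊤ := by
    rintro rfl
    simp only [FractionalIdeal.coeIdeal_top, mul_one] at hJ
    rw [hJ, FractionalIdeal.coe_spanSingleton] at hnp
    exact hnp ⟨⟨f, rfl⟩⟩
  have hJ_two : (2 : ℚ) ≤ Ideal.absNorm J := by
    have h0 : Ideal.absNorm J ≠ 0 := by rwa [Ne, Ideal.absNorm_eq_zero_iff]
    have h1 : Ideal.absNorm J ≠ 1 := by rwa [Ne, Ideal.absNorm_eq_one_iff]
    exact_mod_cast (show 2 ≤ Ideal.absNorm J by omega)
  calc 2 * FractionalIdeal.absNorm I ≤ FractionalIdeal.absNorm I * Ideal.absNorm J := by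
        rw [mul_comm]; exact mul_le_mul_of_nonneg_left hJ_two (FractionalIdeal.absNorm_nonneg I)
    _ = |Algebra.norm ℚ f| := by
        rw [← FractionalIdeal.coeIdeal_absNorm (K := k) J, ← map_mul, hJ,
          FractionalIdeal.absNorm_span_singleton]

namespace NumberField.InfinitePlace

theorem finrank_mul_prod_pow_mult_rpow_le_sum (z : InfinitePlace k → ℝ) (hz : ∀ v, 0 ≤ z v) :
    (Module.finrank ℚ k : ℝ) * (∏ v, z v ^ v.mult) ^ (Module.finrank ℚ k : ℝ)⁻¹
      ≤ ∑ v, v.mult * z v := by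
  have hsum : ∑ v : InfinitePlace k, (v.mult : ℝ) = Module.finrank ℚ k := by
    exact_mod_cast sum_mult_eq
  have hn : (0 : ℝ) < Module.finrank ℚ k := by exact_mod_cast Module.finrank_pos
  have := Real.geom_mean_le_arith_mean univ (fun v ↦ (v.mult : ℝ)) z (fun _ _ ↦ by positivity)
    (hsum ▸ hn) (fun v _ ↦ hz v)
  simp only [Real.rpow_natCast, hsum] at this
  rwa [le_div_iff₀ hn, mul_comm] at this

end NumberField.InfinitePlace

theorem arakelovQ_eq_sum_mult_mul (x : InfinitePlace k → ℝ) (f : k) :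
    arakelovQ k x f = ∑ v, v.mult * (v f ^ 2 * Real.exp (-(2 / v.mult) * x v)) := by
  refine sum_congr rfl fun v _ ↦ ?_
  by_cases h : v.IsReal
  · simp [h, InfinitePlace.mult]
  · simp only [h, if_false, InfinitePlace.mult, Nat.cast_ofNat]
    ring_nf

theorem prod_pow_mult_eq_sq_abs_norm_div (x : InfinitePlace k → ℝ) (f : k) :
    ∏ v, (v f ^ 2 * Real.exp (-(2 / v.mult) * x v)) ^ v.mult
      = (|(Algebra.norm ℚ f : ℝ)| / ∏ v, Real.exp (x v)) ^ 2 := by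
  have hexp (v : InfinitePlace k) : Real.exp (-(2 / v.mult) * x v) ^ v.mult
      = (Real.exp (x v))⁻¹ ^ 2 := by
    rw [← Real.exp_nat_mul, ← Real.exp_neg, ← Real.exp_nat_mul]
    congr 1
    field_simp
    push_cast
    ring
  simp_rw [mul_pow, hexp, ← pow_mul, mul_comm 2, pow_mul, prod_mul_distrib, prod_pow,
    InfinitePlace.prod_eq_abs_norm, Rat.cast_abs, prod_inv_distrib, div_eq_mul_inv, mul_pow]

theorem finrank_mul_rpow_le_arakelovQ (x : InfinitePlace k → ℝ) (f : k) :
    (Module.finrank ℚ k : ℝ) * ((|(Algebra.norm ℚ f : ℝ)| / ∏ v, Real.exp (x v)) ^ 2)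
      ^ (Module.finrank ℚ k : ℝ)⁻¹ ≤ arakelovQ k x f := by
  rw [← prod_pow_mult_eq_sq_abs_norm_div, arakelovQ_eq_sum_mult_mul]
  exact InfinitePlace.finrank_mul_prod_pow_mult_rpow_le_sum _ fun v ↦ by positivity

theorem arakelovQ_ge_of_not_principal (I : FractionalIdeal (nonZeroDivisors (𝓞 k)) k)
    (hI : I ≠ 0) (hnp : ¬ (I : Submodule (𝓞 k) k).IsPrincipal)
    (x : InfinitePlace k → ℝ)
    (hx : ∏ v : InfinitePlace k, Real.exp (x v) = (FractionalIdeal.absNorm I : ℝ))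
    (f : k) (hfI : f ∈ I) (hf : f ≠ 0) :
    (Module.finrank ℚ k : ℝ) * 4 ^ ((Module.finrank ℚ k : ℝ))⁻¹ ≤ arakelovQ k x f := by
  have h2 : 2 ≤ |(Algebra.norm ℚ f : ℝ)| / ∏ v, Real.exp (x v) := by
    rw [le_div_iff₀ (by positivity), hx]
    exact_mod_cast two_mul_absNorm_le_abs_norm_of_not_isPrincipal hI hnp hfI hf
  calc (Module.finrank ℚ k : ℝ) * 4 ^ (Module.finrank ℚ k : ℝ)⁻¹
      ≤ Module.finrank ℚ k * ((|(Algebra.norm ℚ f : ℝ)| / ∏ v, Real.exp (x v)) ^ 2)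
          ^ (Module.finrank ℚ k : ℝ)⁻¹ := by gcongr; nlinarith
    _ ≤ arakelovQ k x f := finrank_mul_rpow_le_arakelovQ x f
end
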